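/- For every pair of integers n, j with 1 ≤ j ≤ n, the Stirling number of the second kind satisfies S(n,j) ≤ (1/√(2πj))·(n^{1−j/n}·θ(j/n))^n. -/
import Mathlib

open Finset

noncomputable def stirling2 (n j : ℕ) : ℝ :=
  (1 / (Nat.factorial j : ℝ)) *
    ∑ i ∈ Finset.range (j + 1), (-1 : ℝ) ^ i * (Nat.choose j i : ℝ) * ((j - i : ℕ) : ℝ) ^ n

noncomputable def theta (x : ℝ) : ℝ := x ^ (1 - x) * Real.exp x


lemma alt_sum_eq_card (n j : ℕ) :
    ∃ N : ℕ, N ≤ j ^ n ∧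
      (∑ i ∈ Finset.range (j + 1), (-1 : ℤ) ^ i * (Nat.choose j i : ℤ) * ((j - i : ℕ) : ℤ) ^ n)
        = (N : ℤ) := by
  classical
  set S : Fin j → Finset (Fin n → Fin j) :=
    fun i => Finset.univ.filter fun f => ∀ a, f a ≠ i with hS
  refine ⟨((Finset.univ : Finset (Fin j)).inf fun i => (S i)ᶜ).card, ?_, ?_⟩
  · calc _ ≤ Fintype.card (Fin n → Fin j) := Finset.card_le_univ _
      _ = j ^ n := by simp [Fintype.card_fun]
  have hcard : ∀ t : Finset (Fin j), (t.inf S).card = (j - t.card) ^ n := by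
    intro t
    have ht : t.inf S = Fintype.piFinset fun _ : Fin n => tᶜ := by
      ext f
      simp only [Finset.mem_inf, Fintype.mem_piFinset, Finset.mem_compl, hS,
        Finset.mem_filter, Finset.mem_univ, true_and]
      exact ⟨fun h a ha => h _ ha a rfl, fun h i hi a hfa => h a (hfa ▸ hi)⟩
    rw [ht, Fintype.card_piFinset]
    simp [Finset.card_compl]
  have hie := Finset.inclusion_exclusion_card_inf_compl (Finset.univ : Finset (Fin j)) S
  rw [hie]
  rw [Finset.sum_powerset]
  have hcu : (Finset.univ : Finset (Fin j)).card = j := by simp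
  rw [hcu]
  refine Finset.sum_congr rfl fun i hi => ?_
  have : ∀ t ∈ Finset.powersetCard i (Finset.univ : Finset (Fin j)),
      (-1 : ℤ) ^ t.card * (t.inf S).card = (-1 : ℤ) ^ i * ((j - i : ℕ) : ℤ) ^ n := by
    intro t ht
    have htc : t.card = i := (Finset.mem_powersetCard.1 ht).2
    rw [htc, hcard, htc]
    push_cast
    ring
  rw [Finset.sum_congr rfl this, Finset.sum_const, Finset.card_powersetCard, hcu]
  push_cast
  ring

lemma alt_sum_le (n j : ℕ) :
    ∑ i ∈ Finset.range (j + 1), (-1 : ℝ) ^ i * (Nat.choose j i : ℝ) * ((j - i : ℕ) : ℝ) ^ n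
      ≤ (j : ℝ) ^ n := by
  obtain ⟨N, hN, hsum⟩ := alt_sum_eq_card n j
  have : (∑ i ∈ Finset.range (j + 1), (-1 : ℤ) ^ i * (Nat.choose j i : ℤ) * ((j - i : ℕ) : ℤ) ^ n)
      ≤ (j : ℤ) ^ n := by
    rw [hsum]; exact_mod_cast hN
  exact_mod_cast this

lemma factorial_lb (j : ℕ) (hj : 1 ≤ j) :
    Real.sqrt (2 * Real.pi * j) * ((j : ℝ) / Real.exp 1) ^ j ≤ (Nat.factorial j : ℝ) := by
  obtain ⟨k, rfl⟩ : ∃ k, j = k + 1 := ⟨j - 1, (Nat.succ_pred_eq_of_pos hj).symm⟩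
  have hlim : Filter.Tendsto (Stirling.stirlingSeq ∘ Nat.succ) Filter.atTop
      (nhds (Real.sqrt Real.pi)) :=
    Stirling.tendsto_stirlingSeq_sqrt_pi.comp (Filter.tendsto_add_atTop_nat 1)
  have h1 : Real.sqrt Real.pi ≤ Stirling.stirlingSeq (k + 1) :=
    Stirling.stirlingSeq'_antitone.le_of_tendsto hlim k
  set j := k + 1
  have hjpos : (0 : ℝ) < j := by positivity
  have hden : (0 : ℝ) < Real.sqrt (2 * j) * ((j : ℝ) / Real.exp 1) ^ j := by positivity
  rw [Stirling.stirlingSeq, le_div_iff₀ hden] at h1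
  calc Real.sqrt (2 * Real.pi * j) * ((j : ℝ) / Real.exp 1) ^ j
      = Real.sqrt Real.pi * (Real.sqrt (2 * j) * ((j : ℝ) / Real.exp 1) ^ j) := by
        rw [show (2 * Real.pi * j : ℝ) = Real.pi * (2 * j) by ring,
          Real.sqrt_mul Real.pi_pos.le]
        ring
    _ ≤ (Nat.factorial j : ℝ) := h1

theorem stmt_8 (n j : ℕ) (hj1 : 1 ≤ j) (hj2 : j ≤ n) :
    stirling2 n j ≤
      (1 / Real.sqrt (2 * Real.pi * j)) *
        ((n : ℝ) ^ (1 - (j : ℝ) / n) * theta ((j : ℝ) / n)) ^ n := by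
  have hn1 : 1 ≤ n := le_trans hj1 hj2
  have hnpos : (0 : ℝ) < n := by exact_mod_cast hn1
  have hjpos : (0 : ℝ) < j := by exact_mod_cast hj1
  -- simplify RHS
  have hbase : (n : ℝ) ^ (1 - (j : ℝ) / n) * theta ((j : ℝ) / n)
      = (j : ℝ) ^ (1 - (j : ℝ) / n) * Real.exp ((j : ℝ) / n) := by
    rw [theta, ← mul_assoc, ← Real.mul_rpow hnpos.le (by positivity),
      mul_div_cancel₀ _ hnpos.ne']
  have hrhs : ((n : ℝ) ^ (1 - (j : ℝ) / n) * theta ((j : ℝ) / n)) ^ n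
      = (j : ℝ) ^ (n - j) * Real.exp j := by
    rw [hbase, mul_pow, ← Real.rpow_natCast ((j:ℝ) ^ (1 - (j : ℝ) / n)) n,
      ← Real.rpow_mul hjpos.le, ← Real.exp_nat_mul]
    have h1 : (1 - (j : ℝ) / n) * n = ((n - j : ℕ) : ℝ) := by
      rw [Nat.cast_sub hj2]; field_simp
    have h2 : (n : ℝ) * ((j : ℝ) / n) = j := by field_simp
    rw [h1, h2, Real.rpow_natCast]
  rw [hrhs]
  -- bound LHS
  have hfac : (0 : ℝ) < (Nat.factorial j : ℝ) := by exact_mod_cast j.factorial_pos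
  have h1 : stirling2 n j ≤ (j : ℝ) ^ n / (Nat.factorial j : ℝ) := by
    rw [stirling2, one_div, inv_mul_eq_div]
    gcongr
    exact alt_sum_le n j
  refine h1.trans ?_
  have hsq : (0 : ℝ) < Real.sqrt (2 * Real.pi * j) := by positivity
  rw [one_div, inv_mul_eq_div, div_le_div_iff₀ hfac hsq]
  have key := factorial_lb j hj1
  have hmul : (0 : ℝ) ≤ (j : ℝ) ^ (n - j) * Real.exp j := by positivity
  calc (j : ℝ) ^ n * Real.sqrt (2 * Real.pi * j)
      = (Real.sqrt (2 * Real.pi * j) * ((j : ℝ) / Real.exp 1) ^ j)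
          * ((j : ℝ) ^ (n - j) * Real.exp j) := by
        rw [div_pow, ← Real.exp_nat_mul]
        have : (j : ℝ) ^ j * (j : ℝ) ^ (n - j) = (j : ℝ) ^ n := by
          rw [← pow_add, Nat.add_sub_cancel' hj2]
        field_simp [Real.exp_ne_zero]
        rw [← this]
    _ ≤ (Nat.factorial j : ℝ) * ((j : ℝ) ^ (n - j) * Real.exp j) :=
        mul_le_mul_of_nonneg_right key hmul
    _ = (j : ℝ) ^ (n - j) * Real.exp j * (Nat.factorial j : ℝ) := by ring
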